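/- arXiv:1508.05761 — 5 statements merged into one kernel-verified Lean document; each statement's English description precedes it below -/
import Mathlib

section
/- Let k be a field and let A, H, C be commutative k-algebras, with k-algebra maps s, t : A → H, and let η : A ⊗_k A → H be the k-algebra map determined by η(a ⊗ a') = s(a)·t(a'). If H is faithfully flat as an (A ⊗_k A)-module via η, then for every pair of k-algebra maps x, y : A → C there exist a commutative k-algebra C', a faithfully flat k-algebra map p : C → C', and a k-algebra map g : H → C' such that g ∘ s = p ∘ x and g ∘ t = p ∘ y. -/
open TensorProduct

universe u

/-- Auxiliary: faithful flatness is stable under base change. -/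
theorem faithfullyFlat_baseChange (R S M : Type u) [CommRing R] [CommRing S] [Algebra R S]
    [AddCommGroup M] [Module R M] [Module.FaithfullyFlat R M] :
    Module.FaithfullyFlat S (S ⊗[R] M) := by
  rw [Module.FaithfullyFlat.iff_flat_and_rTensor_faithful]
  refine ⟨inferInstance, fun N _ _ hN => ?_⟩
  letI : Module R N := Module.compHom N (algebraMap R S)
  haveI : IsScalarTower R S N :=
    ⟨fun r s n => by
      rw [Algebra.smul_def, mul_smul]
      rfl⟩
  haveI : Nontrivial (N ⊗[R] M) := Module.FaithfullyFlat.rTensor_nontrivial R M N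
  exact (TensorProduct.AlgebraTensorModule.cancelBaseChange R S S N M).toEquiv.nontrivial

/-- Theorem A, (i) ⇒ (ii): if the unit map `η = s ⊗ t : A ⊗ A → H` of a commutative
Hopf algebroid is faithfully flat, then any two objects `x, y : A → C` of the associated
presheaf of groupoids are locally isomorphic in the fpqc topology. -/
theorem geometrically_transitive_implies_locally_isomorphic
    (k : Type u) [Field k] (A H C : Type u)
    [CommRing A] [CommRing H] [CommRing C]
    [Algebra k A] [Algebra k H] [Algebra k C]
    (s t : A →ₐ[k] H) (η : (A ⊗[k] A) →ₐ[k] H)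
    (hη : ∀ a a' : A, η (a ⊗ₜ[k] a') = s a * t a')
    (hff : letI : Algebra (A ⊗[k] A) H := η.toRingHom.toAlgebra
           Module.FaithfullyFlat (A ⊗[k] A) H)
    (x y : A →ₐ[k] C) :
    ∃ (C' : Type u) (_ : CommRing C') (_ : Algebra k C')
      (p : C →ₐ[k] C') (g : H →ₐ[k] C'),
      (letI : Algebra C C' := p.toRingHom.toAlgebra
       Module.FaithfullyFlat C C') ∧
      (∀ a : A, g (s a) = p (x a)) ∧ (∀ a : A, g (t a) = p (y a)) := by
  letI : Algebra (A ⊗[k] A) H := η.toRingHom.toAlgebra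
  haveI hffH : Module.FaithfullyFlat (A ⊗[k] A) H := hff
  let φ : (A ⊗[k] A) →ₐ[k] C := Algebra.TensorProduct.lift x y (fun a a' => Commute.all _ _)
  letI : Algebra (A ⊗[k] A) C := φ.toRingHom.toAlgebra
  haveI : IsScalarTower k (A ⊗[k] A) C :=
    IsScalarTower.of_algebraMap_eq fun r => (φ.commutes r).symm
  haveI : IsScalarTower k (A ⊗[k] A) H :=
    IsScalarTower.of_algebraMap_eq fun r => (η.commutes r).symm
  haveI : SMulCommClass (A ⊗[k] A) k C :=
    ⟨fun b r c => by
      rw [Algebra.smul_def (A := C) b, Algebra.smul_def (A := C) b, mul_smul_comm]⟩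
  let C' := C ⊗[A ⊗[k] A] H
  let p : C →ₐ[k] C' := Algebra.TensorProduct.includeLeft
  let g : H →ₐ[k] C' := (Algebra.TensorProduct.includeRight (R := A ⊗[k] A)
      (A := C) (B := H)).restrictScalars k
  haveI natFF : Module.FaithfullyFlat C C' := faithfullyFlat_baseChange (A ⊗[k] A) C H
  refine ⟨C', inferInstance, inferInstance, p, g, ?_, ?_, ?_⟩
  · have heq : p.toRingHom.toAlgebra = (inferInstance : Algebra C C') :=
      Algebra.algebra_ext _ _ fun c => rfl
    exact heq ▸ natFF
  · intro a
    have h1 : (a ⊗ₜ[k] (1 : A)) • (1 : H) = s a := by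
      rw [Algebra.smul_def, mul_one]
      show η _ = _
      rw [hη, map_one, mul_one]
    have h2 : (a ⊗ₜ[k] (1 : A)) • (1 : C) = x a := by
      rw [Algebra.smul_def, mul_one]
      show φ _ = _
      rw [Algebra.TensorProduct.lift_tmul, map_one, mul_one]
    show (1 : C) ⊗ₜ[A ⊗[k] A] (s a) = (x a) ⊗ₜ[A ⊗[k] A] (1 : H)
    rw [← h1, ← h2]
    exact (TensorProduct.smul_tmul _ _ _).symm
  · intro a
    have h1 : ((1 : A) ⊗ₜ[k] a) • (1 : H) = t a := by
      rw [Algebra.smul_def, mul_one]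
      show η _ = _
      rw [hη, map_one, one_mul]
    have h2 : ((1 : A) ⊗ₜ[k] a) • (1 : C) = y a := by
      rw [Algebra.smul_def, mul_one]
      show φ _ = _
      rw [Algebra.TensorProduct.lift_tmul, map_one, one_mul]
    show (1 : C) ⊗ₜ[A ⊗[k] A] (t a) = (y a) ⊗ₜ[A ⊗[k] A] (1 : H)
    rw [← h1, ← h2]
    exact (TensorProduct.smul_tmul _ _ _).symm
end

section
/- Let φ : R → T be a faithfully flat homomorphism of commutative rings, P an R-module, and n a natural number. Then P is locally free of constant rank n (i.e., finitely generated, projective, and of rank n at every prime ideal of R) if and only if the base change T ⊗_R P is locally free of constant rank n as a T-module. -/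
open TensorProduct

universe u v

section Descent

variable {R T : Type u} [CommRing R] [CommRing T] [Algebra R T]
variable {P : Type u} [AddCommGroup P] [Module R P]

/-- Descent of finite generation along a faithfully flat base change. -/
theorem Module.Finite.of_baseChange_faithfullyFlat
    (hφ : Module.FaithfullyFlat R T) [Module.Finite T (T ⊗[R] P)] :
    Module.Finite R P := by
  haveI := hφ
  obtain ⟨s, hs⟩ := (Module.finite_def.mp ‹Module.Finite T (T ⊗[R] P)›)
  choose rep hrep using fun g : T ⊗[R] P => TensorProduct.exists_finset g
  classical
  set u : Finset P := s.biUnion fun g => (rep g).image Prod.snd with hu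
  set N : Submodule R P := Submodule.span R (u : Set P) with hN
  let q : P →ₗ[R] P ⧸ N := N.mkQ
  have hker : (s : Set (T ⊗[R] P)) ⊆ (LinearMap.ker (q.baseChange T) : Set (T ⊗[R] P)) := by
    intro g hg
    simp only [SetLike.mem_coe, LinearMap.mem_ker]
    rw [hrep g, map_sum]
    refine Finset.sum_eq_zero fun i hi => ?_
    have hiN : i.2 ∈ N := Submodule.subset_span (Finset.mem_coe.mpr
      (Finset.mem_biUnion.mpr ⟨g, hg, Finset.mem_image_of_mem Prod.snd hi⟩))
    rw [LinearMap.baseChange_tmul]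
    have : q i.2 = 0 := (Submodule.Quotient.mk_eq_zero N).mpr hiN
    rw [this, TensorProduct.tmul_zero]
  have hker' : LinearMap.ker (q.baseChange T) = ⊤ := by
    rw [eq_top_iff, ← hs]
    exact Submodule.span_le.mpr hker
  have hzero : ∀ x : T ⊗[R] P, q.baseChange T x = 0 := fun x =>
    LinearMap.mem_ker.mp (hker' ▸ Submodule.mem_top)
  have hsurj : Function.Surjective (q.baseChange T) := by
    rw [show (q.baseChange T : T ⊗[R] P → T ⊗[R] (P ⧸ N)) = q.lTensor T from
      LinearMap.baseChange_eq_ltensor q]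
    exact LinearMap.lTensor_surjective T (Submodule.mkQ_surjective N)
  have : Subsingleton (T ⊗[R] (P ⧸ N)) := by
    refine subsingleton_of_forall_eq 0 fun y => ?_
    obtain ⟨x, rfl⟩ := hsurj y
    exact hzero x
  have : Subsingleton (P ⧸ N) := Module.FaithfullyFlat.lTensor_reflects_triviality R T (P ⧸ N)
  have hNtop : N = ⊤ := Submodule.Quotient.subsingleton_iff.mp this
  exact ⟨hNtop ▸ Submodule.fg_span (u.finite_toSet)⟩

/-- A faithfully flat base change reflects injectivity. -/
theorem injective_of_baseChange_injective
    (hφ : Module.FaithfullyFlat R T) {M N : Type u}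
    [AddCommGroup M] [Module R M] [AddCommGroup N] [Module R N]
    (f : M →ₗ[R] N) (h : Function.Injective (f.baseChange T)) :
    Function.Injective f := by
  haveI := hφ
  rw [← LinearMap.ker_eq_bot]
  by_contra hne
  have : Nontrivial (LinearMap.ker f) := Submodule.nontrivial_iff_ne_bot.mpr hne
  have : Nontrivial (T ⊗[R] (LinearMap.ker f)) :=
    Module.FaithfullyFlat.lTensor_nontrivial R T _
  obtain ⟨x, hx⟩ := exists_ne (0 : T ⊗[R] (LinearMap.ker f))
  have hj : Function.Injective ((LinearMap.ker f).subtype.baseChange T) := by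
    rw [LinearMap.baseChange_eq_ltensor]
    exact Module.Flat.lTensor_preserves_injective_linearMap _ (Submodule.injective_subtype _)
  have hcomp : f.baseChange T ((LinearMap.ker f).subtype.baseChange T x) = 0 := by
    rw [← LinearMap.comp_apply, ← LinearMap.baseChange_comp]
    have : f ∘ₗ (LinearMap.ker f).subtype = 0 := by
      ext ⟨y, hy⟩; exact hy
    rw [this]
    simp
  have : (LinearMap.ker f).subtype.baseChange T x = 0 := by
    apply h
    simpa using hcomp
  exact hx (hj (by simpa using this))

/-- Descent of flatness along a faithfully flat base change. -/
theorem Module.Flat.of_baseChange_faithfullyFlat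
    (hφ : Module.FaithfullyFlat R T) [Module.Flat T (T ⊗[R] P)] :
    Module.Flat R P := by
  rw [Module.Flat.iff_lTensor_preserves_injective_linearMap]
  intro N N' _ _ _ _ f hf
  apply injective_of_baseChange_injective hφ
  let eN := TensorProduct.AlgebraTensorModule.distribBaseChange R T P N
  let eN' := TensorProduct.AlgebraTensorModule.distribBaseChange R T P N'
  have key : eN'.toLinearMap ∘ₗ (f.lTensor P).baseChange T =
      ((f.baseChange T).lTensor (T ⊗[R] P)) ∘ₗ eN.toLinearMap := by
    ext n
    simp [eN, eN', TensorProduct.AlgebraTensorModule.distribBaseChange]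
  have hinj : Function.Injective ((f.baseChange T).lTensor (T ⊗[R] P)) := by
    apply Module.Flat.lTensor_preserves_injective_linearMap
    rw [LinearMap.baseChange_eq_ltensor]
    exact Module.Flat.lTensor_preserves_injective_linearMap _ hf
  have : ⇑((f.lTensor P).baseChange T) =
      eN'.symm ∘ ((f.baseChange T).lTensor (T ⊗[R] P)) ∘ eN := by
    funext x
    simpa using congrArg eN'.symm (LinearMap.congr_fun key x)
  rw [this]
  exact eN'.symm.injective.comp (hinj.comp eN.injective)

/-- Descent of finite presentation along a faithfully flat base change. -/
theorem Module.FinitePresentation.of_baseChange_faithfullyFlat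
    (hφ : Module.FaithfullyFlat R T) [Module.FinitePresentation T (T ⊗[R] P)] :
    Module.FinitePresentation R P := by
  have hfin : Module.Finite R P := Module.Finite.of_baseChange_faithfullyFlat hφ
  obtain ⟨m, f, hf⟩ := Module.Finite.exists_fin' R P
  have hfsurj : Function.Surjective (f.baseChange T) := by
    rw [LinearMap.baseChange_eq_ltensor]
    exact LinearMap.lTensor_surjective T hf
  have hexact : Function.Exact ((LinearMap.ker f).subtype.baseChange T) (f.baseChange T) :=
    lTensor_exact T f.exact_subtype_ker_map hf
  have hrange : LinearMap.range ((LinearMap.ker f).subtype.baseChange T)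
      = LinearMap.ker (f.baseChange T) := (LinearMap.exact_iff.mp hexact).symm
  have hkerfg : (LinearMap.ker (f.baseChange T)).FG :=
    Module.FinitePresentation.fg_ker (f.baseChange T) hfsurj
  have hj : Function.Injective ((LinearMap.ker f).subtype.baseChange T) := by
    rw [LinearMap.baseChange_eq_ltensor]
    exact Module.Flat.lTensor_preserves_injective_linearMap _ (Submodule.injective_subtype _)
  have hokfin : Module.Finite T (T ⊗[R] (LinearMap.ker f)) := by
    have e : (T ⊗[R] (LinearMap.ker f)) ≃ₗ[T]
        LinearMap.ker (f.baseChange T) :=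
      (LinearEquiv.ofInjective _ hj).trans (LinearEquiv.ofEq _ _ hrange)
    have : Module.Finite T (LinearMap.ker (f.baseChange T)) :=
      ⟨(Submodule.fg_top _).mpr hkerfg⟩
    exact Module.Finite.equiv e.symm
  have : Module.Finite R (LinearMap.ker f) :=
    Module.Finite.of_baseChange_faithfullyFlat hφ
  exact Module.finitePresentation_of_free_of_surjective f hf
    (Module.Finite.iff_fg.mp this)

/-- Lying over: a faithfully flat `R`-algebra hits every prime of `R`. -/
theorem exists_prime_comap_eq_of_faithfullyFlat
    (hφ : Module.FaithfullyFlat R T) (p : Ideal R) [p.IsPrime] :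
    ∃ (q : Ideal T) (_ : q.IsPrime), q.comap (algebraMap R T) = p := by
  haveI := hφ
  let Rp := Localization.AtPrime p
  let κ := IsLocalRing.ResidueField Rp
  have hnt : Nontrivial (T ⊗[R] κ) := Module.FaithfullyFlat.lTensor_nontrivial R T κ
  obtain ⟨m, hm⟩ := Ideal.exists_maximal (T ⊗[R] κ)
  haveI := hm.isPrime
  refine ⟨m.comap (algebraMap T (T ⊗[R] κ)), Ideal.IsPrime.comap _, ?_⟩
  have hcomm : ∀ r : R, algebraMap T (T ⊗[R] κ) (algebraMap R T r)
      = (1 : T) ⊗ₜ[R] (algebraMap R κ r) := by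
    intro r
    rw [← IsScalarTower.algebraMap_apply, Algebra.algebraMap_eq_smul_one]
    show r • ((1 : T) ⊗ₜ[R] (1 : κ)) = _
    rw [Algebra.algebraMap_eq_smul_one, TensorProduct.tmul_smul]
  have hzero : ∀ r : R, r ∈ p ↔ algebraMap R κ r = 0 := by
    intro r
    rw [IsScalarTower.algebraMap_apply R Rp κ]
    show _ ↔ IsLocalRing.residue Rp (algebraMap R Rp r) = 0
    rw [IsLocalRing.residue_eq_zero_iff]
    exact (IsLocalization.AtPrime.to_map_mem_maximal_iff Rp p r).symm
  ext r
  simp only [Ideal.mem_comap, hcomm r]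
  constructor
  · intro h
    by_contra hr
    have hunit : IsUnit (algebraMap R κ r) :=
      IsUnit.mk0 _ (fun h0 => hr ((hzero r).mpr h0))
    have : IsUnit ((1 : T) ⊗ₜ[R] (algebraMap R κ r)) := by
      have := hunit.map (Algebra.TensorProduct.includeRight (R := R) (A := T) (B := κ))
      rwa [Algebra.TensorProduct.includeRight_apply] at this
    exact hm.ne_top (Ideal.eq_top_of_isUnit_mem _ h this)
  · intro h
    rw [(hzero r).mp h, TensorProduct.tmul_zero]
    exact m.zero_mem

end Descent

section Rank

variable (R T : Type u) [CommRing R] [CommRing T] [Algebra R T]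
variable (P : Type u) [AddCommGroup P] [Module R P]

theorem localized_free_and_finrank_eq
    (q : Ideal T) [q.IsPrime]
    (hfree : Module.Free (Localization.AtPrime (q.comap (algebraMap R T)))
      (LocalizedModule (q.comap (algebraMap R T)).primeCompl P)) :
    Module.Free (Localization.AtPrime q) (LocalizedModule q.primeCompl (T ⊗[R] P)) ∧
    Module.finrank (Localization.AtPrime q) (LocalizedModule q.primeCompl (T ⊗[R] P)) =
      Module.finrank (Localization.AtPrime (q.comap (algebraMap R T)))
        (LocalizedModule (q.comap (algebraMap R T)).primeCompl P) := by
  set p := q.comap (algebraMap R T) with hp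
  haveI : p.IsPrime := Ideal.IsPrime.comap _
  let Rₚ := Localization.AtPrime p
  let Tq := Localization.AtPrime q
  letI : Algebra Rₚ Tq := (Localization.localRingHom p q (algebraMap R T) rfl).toAlgebra
  haveI : IsScalarTower R Rₚ Tq := IsScalarTower.of_algebraMap_eq'
    (by simp [RingHom.algebraMap_toAlgebra, Localization.localRingHom,
        ← IsScalarTower.algebraMap_eq]; erw [IsLocalization.map_comp]; exact IsScalarTower.algebraMap_eq R T Tq)
  let e : Tq ⊗[T] (T ⊗[R] P) ≃ₗ[Tq] Tq ⊗[Rₚ] (Rₚ ⊗[R] P) :=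
    TensorProduct.AlgebraTensorModule.cancelBaseChange R T Tq Tq P ≪≫ₗ
      (TensorProduct.AlgebraTensorModule.cancelBaseChange R Rₚ Tq Tq P).symm
  let eT : Tq ⊗[T] (T ⊗[R] P) ≃ₗ[Tq] LocalizedModule q.primeCompl (T ⊗[R] P) :=
    ((isLocalizedModule_iff_isBaseChange q.primeCompl Tq
      (LocalizedModule.mkLinearMap q.primeCompl (T ⊗[R] P))).mp inferInstance).equiv
  let eR : Rₚ ⊗[R] P ≃ₗ[Rₚ] LocalizedModule p.primeCompl P :=
    ((isLocalizedModule_iff_isBaseChange p.primeCompl Rₚ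
      (LocalizedModule.mkLinearMap p.primeCompl P)).mp inferInstance).equiv
  haveI hfree' : Module.Free Rₚ (Rₚ ⊗[R] P) := Module.Free.of_equiv eR.symm
  haveI : Module.Free Tq (Tq ⊗[Rₚ] (Rₚ ⊗[R] P)) := inferInstance
  have hfreeT : Module.Free Tq (LocalizedModule q.primeCompl (T ⊗[R] P)) :=
    Module.Free.of_equiv (e.symm.trans eT)
  refine ⟨hfreeT, ?_⟩
  calc Module.finrank Tq (LocalizedModule q.primeCompl (T ⊗[R] P))
      = Module.finrank Tq (Tq ⊗[T] (T ⊗[R] P)) := (LinearEquiv.finrank_eq eT).symm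
    _ = Module.finrank Tq (Tq ⊗[Rₚ] (Rₚ ⊗[R] P)) := LinearEquiv.finrank_eq e
    _ = Module.finrank Rₚ (Rₚ ⊗[R] P) := Module.finrank_baseChange
    _ = Module.finrank Rₚ (LocalizedModule p.primeCompl P) := LinearEquiv.finrank_eq eR

end Rank

/-- A module `P` over a commutative ring `R` is locally free of constant rank `n` if it is
finitely generated, projective, and its localization at every prime ideal of `R` is free of
rank `n`. -/
def LocallyFreeOfConstantRank (R : Type u) [CommRing R]
    (P : Type v) [AddCommGroup P] [Module R P] (n : ℕ) : Prop :=
  Module.Finite R P ∧ Module.Projective R P ∧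
    ∀ (p : Ideal R) [p.IsPrime],
      Module.Free (Localization.AtPrime p) (LocalizedModule p.primeCompl P) ∧
      Module.finrank (Localization.AtPrime p) (LocalizedModule p.primeCompl P) = n

/-- Lemma: for a faithfully flat homomorphism `R → T` of commutative rings (encoded by an
`R`-algebra structure on `T` which is faithfully flat as an `R`-module) and an `R`-module `P`,
`P` is locally free of constant rank `n` over `R` if and only if the base change `T ⊗[R] P`
is locally free of constant rank `n` over `T`. -/
theorem locallyFreeOfConstantRank_iff_of_faithfullyFlat
    (R T : Type u) [CommRing R] [CommRing T] [Algebra R T]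
    (hφ : Module.FaithfullyFlat R T)
    (P : Type u) [AddCommGroup P] [Module R P] (n : ℕ) :
    LocallyFreeOfConstantRank R P n ↔
      LocallyFreeOfConstantRank T (T ⊗[R] P) n := by
  constructor
  · rintro ⟨hfin, hproj, hloc⟩
    haveI := hfin; haveI := hproj
    haveI : Module.FinitePresentation R P := Module.finitePresentation_of_projective R P
    haveI : Module.Flat R P := Module.Flat.of_projective
    haveI : Module.Finite T (T ⊗[R] P) := inferInstance
    haveI : Module.FinitePresentation T (T ⊗[R] P) := inferInstance
    haveI : Module.Flat T (T ⊗[R] P) := Module.Flat.baseChange R T P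
    refine ⟨inferInstance, ?_, ?_⟩
    · exact Module.projective_of_localization_maximal fun I hI =>
        haveI := hI.isPrime
        haveI : Module.Free (Localization.AtPrime I)
            (LocalizedModule I.primeCompl (T ⊗[R] P)) :=
          Module.free_of_flat_of_isLocalRing (R := Localization.AtPrime I)
            (P := LocalizedModule I.primeCompl (T ⊗[R] P))
        Module.Projective.of_free
    · intro q hq
      haveI : (q.comap (algebraMap R T)).IsPrime := Ideal.IsPrime.comap _
      obtain ⟨h1, h2⟩ := hloc (q.comap (algebraMap R T))
      obtain ⟨hf, hr⟩ := localized_free_and_finrank_eq R T P q h1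
      exact ⟨hf, hr.trans h2⟩
  · rintro ⟨hfinT, hprojT, hlocT⟩
    haveI := hfinT; haveI := hprojT
    haveI : Module.FinitePresentation T (T ⊗[R] P) :=
      Module.finitePresentation_of_projective T (T ⊗[R] P)
    haveI : Module.Flat T (T ⊗[R] P) := Module.Flat.of_projective
    haveI hfin : Module.Finite R P := Module.Finite.of_baseChange_faithfullyFlat hφ
    haveI hfp : Module.FinitePresentation R P :=
      Module.FinitePresentation.of_baseChange_faithfullyFlat hφ
    haveI hflat : Module.Flat R P := Module.Flat.of_baseChange_faithfullyFlat hφ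
    have hfreeloc : ∀ (p : Ideal R) [p.IsPrime],
        Module.Free (Localization.AtPrime p) (LocalizedModule p.primeCompl P) := by
      intro p hp
      exact Module.free_of_flat_of_isLocalRing
    refine ⟨hfin, ?_, ?_⟩
    · exact Module.projective_of_localization_maximal fun I hI =>
        haveI := hI.isPrime
        haveI := hfreeloc I
        Module.Projective.of_free
    · intro p hp
      obtain ⟨q, hqprime, hqp⟩ := exists_prime_comap_eq_of_faithfullyFlat hφ p
      haveI := hqprime
      subst hqp
      refine ⟨hfreeloc _, ?_⟩
      have hr := (localized_free_and_finrank_eq R T P q (hfreeloc _)).2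
      exact hr.symm.trans (hlocT q).2
end

section
/- Let G be a groupoid. For a map ς : X → Obj(G), let P_ς := { (x, c, f) : x ∈ X, c ∈ Obj(G), f : ς(x) ⟶ c } be the pull-back set, with t̃(x, c, f) := c. Then: (1) for every X and every ς, the canonical map ∇' sending a pair ((x, c, f), (y, h)), where h : ς(y) ⟶ ς(x) is an arrow of G (an arrow of the induced groupoid G^ς from y to x), to ((x, c, f), (y, c, f ∘ h)), is a bijection from { ((x,c,f), (y,h)) : h : ς(y) ⟶ ς(x) } onto { ((x,c,f), (y,c',f')) ∈ P_ς × P_ς : c = c' }; and (2) G is transitive if and only if for every nonempty type X and every map ς : X → Obj(G) the map t̃ : P_ς → Obj(G) is surjective. Together these say: G is transitive if and only if for every nonempty X and every ς the pull-back biset P_ς is a principal (G, G^ς)-biset. -/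
open CategoryTheory

universe u v

/-- The pull-back set `P_ς = { (x, c, f) : x ∈ X, c ∈ Obj(G), f : ς(x) ⟶ c }` attached to a
map `ς : X → Obj(G)` (the underlying set of the pull-back of the unit principal biset of `G`
along the canonical functor `G^ς → G`). -/
def PullbackSet (G : Type u) [Groupoid.{v} G] (X : Type u) (ς : X → G) :=
  (x : X) × (c : G) × (ς x ⟶ c)

/-- The target map `t̃ : P_ς → Obj(G)`, `(x, c, f) ↦ c`. -/
def pullbackTarget (G : Type u) [Groupoid.{v} G] (X : Type u) (ς : X → G) :
    PullbackSet G X ς → G :=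
  fun p => p.2.1

/-- (1) For every `X` and `ς : X → Obj(G)`, the canonical map
`∇' : ((x,c,f),(y,h)) ↦ ((x,c,f),(y,c,f∘h))`, with `h : ς(y) ⟶ ς(x)` an arrow of the induced
groupoid `G^ς`, is a bijection onto `{ ((x,c,f),(y,c',f')) ∈ P_ς × P_ς : c = c' }`; and
(2) `G` is transitive if and only if for every nonempty `X` and every `ς : X → Obj(G)` the
map `t̃ : P_ς → Obj(G)` is surjective.  Together: `G` is transitive iff every pull-back biset
`P_ς` (with nonempty `X`) is a principal `(G, G^ς)`-biset. -/
theorem transitive_iff_pullback_principal (G : Type u) [Groupoid.{v} G] :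
    (∀ (X : Type u) (ς : X → G),
      Function.Bijective
        (fun z : (p : PullbackSet G X ς) × ((y : X) × (ς y ⟶ ς p.1)) =>
          (⟨(z.1, ⟨z.2.1, z.1.2.1, z.2.2 ≫ z.1.2.2⟩), rfl⟩ :
            {pq : PullbackSet G X ς × PullbackSet G X ς // pq.1.2.1 = pq.2.2.1}))) ∧
    ((∀ a b : G, Nonempty (a ⟶ b)) ↔
      ∀ (X : Type u), Nonempty X → ∀ ς : X → G,
        Function.Surjective (pullbackTarget G X ς)) := by
  constructor
  · intro X ς
    constructor
    · rintro ⟨⟨x, c, f⟩, ⟨y, h⟩⟩ ⟨⟨x', c', f'⟩, ⟨y', h'⟩⟩ heq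
      simp only [Subtype.mk.injEq, Prod.mk.injEq] at heq
      obtain ⟨h1, h2⟩ := Prod.ext_iff.mp heq
      obtain ⟨rfl, h1⟩ := Sigma.mk.inj_iff.mp h1
      obtain ⟨rfl, h1⟩ := Sigma.mk.inj_iff.mp (eq_of_heq h1)
      rw [heq_eq_eq] at h1
      subst h1
      obtain ⟨rfl, h2⟩ := Sigma.mk.inj_iff.mp h2
      obtain ⟨_, h2⟩ := Sigma.mk.inj_iff.mp (eq_of_heq h2)
      rw [heq_eq_eq] at h2
      have : h = h' := by
        have := h2 =≫ Groupoid.inv f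
        simpa using this
      subst this
      rfl
    · rintro ⟨⟨⟨x, c, f⟩, ⟨y, c', f'⟩⟩, hc⟩
      dsimp at hc
      subst hc
      exact ⟨⟨⟨x, c, f⟩, ⟨y, f' ≫ Groupoid.inv f⟩⟩, by simp⟩
  · constructor
    · intro htrans X hX ς b
      obtain ⟨x⟩ := hX
      obtain ⟨f⟩ := htrans (ς x) b
      exact ⟨⟨x, b, f⟩, rfl⟩
    · intro hsurj a b
      obtain ⟨⟨x, c, f⟩, hc⟩ := hsurj PUnit ⟨PUnit.unit⟩ (fun _ => a) b
      exact ⟨f ≫ eqToHom hc⟩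
end

section
/- Let (X, ς, ϑ) be a left principal (H, G)-biset. Then the map Γ sending a triple (h, x, g), where x ∈ X, h is an arrow of H with source ϑ(x), and g is an arrow of G with source ς(x), to the triple (x, g, (h·x)·g⁻¹), is a bijection from { (h, x, g) : source(h) = ϑ(x), source(g) = ς(x) } onto { (x, g, y) : x, y ∈ X, g an arrow of G with source(g) = ς(x) and target(g) = ς(y) }. (This bijection, together with the surjectivity of ς, expresses that the canonical projection Σ from the two-sided translation groupoid H ⋉ X ⋊ G to G is a weak equivalence, which is the content of the paper's Proposition on principal bisets and weak equivalences.) -/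
open CategoryTheory

universe u₁ u₂ u₃ u₄

/-- An `(H, G)`-biset `(X, ς, ϑ)` for groupoids `H` and `G`: a left `H`-action on `X` along
`ϑ : X → Obj(H)` and a right `G`-action on `X` along `ς : X → Obj(G)` which commute and leave
the other anchor map invariant.  Transports along the propositional equalities recording the
anchors of acted elements are performed with `eqToHom`. -/
structure GroupoidBiset (H : Type u₁) (G : Type u₂) [Groupoid H] [Groupoid G]
    (X : Type u₃) (ς : X → G) (ϑ : X → H) where
  /-- the left action `h · x` of an arrow `h` of `H` with source `ϑ x` -/
  lAct : ∀ (x : X) {c : H}, (ϑ x ⟶ c) → X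
  /-- `ϑ (h · x)` is the target of `h` -/
  lBase : ∀ (x : X) {c : H} (h : ϑ x ⟶ c), ϑ (lAct x h) = c
  /-- `id_{ϑ x} · x = x` -/
  lId : ∀ x : X, lAct x (𝟙 (ϑ x)) = x
  /-- `h' · (h · x) = (h' ∘ h) · x` -/
  lComp : ∀ (x : X) {c c' : H} (h : ϑ x ⟶ c) (h' : c ⟶ c'),
    lAct (lAct x h) (eqToHom (lBase x h) ≫ h') = lAct x (h ≫ h')
  /-- the right action `x · g` of an arrow `g` of `G` with target `ς x` -/
  rAct : ∀ (x : X) {c : G}, (c ⟶ ς x) → X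
  /-- `ς (x · g)` is the source of `g` -/
  rBase : ∀ (x : X) {c : G} (g : c ⟶ ς x), ς (rAct x g) = c
  /-- `x · id_{ς x} = x` -/
  rId : ∀ x : X, rAct x (𝟙 (ς x)) = x
  /-- `(x · g) · g' = x · (g ∘ g')` -/
  rComp : ∀ (x : X) {c c' : G} (g : c ⟶ ς x) (g' : c' ⟶ c),
    rAct (rAct x g) (g' ≫ eqToHom (rBase x g).symm) = rAct x (g' ≫ g)
  /-- `ϑ (x · g) = ϑ x` -/
  theta_rAct : ∀ (x : X) {c : G} (g : c ⟶ ς x), ϑ (rAct x g) = ϑ x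
  /-- `ς (h · x) = ς x` -/
  sigma_lAct : ∀ (x : X) {c : H} (h : ϑ x ⟶ c), ς (lAct x h) = ς x
  /-- `h · (x · g) = (h · x) · g` -/
  middle_assoc : ∀ (x : X) {c : H} (h : ϑ x ⟶ c) {d : G} (g : d ⟶ ς x),
    lAct (rAct x g) (eqToHom (theta_rAct x g) ≫ h) =
      rAct (lAct x h) (g ≫ eqToHom (sigma_lAct x h).symm)

/-- The canonical map `∇ : (h, x) ↦ (h · x, x)` of an `(H, G)`-biset, from the set of pairs of
an element `x ∈ X` and an arrow `h` of `H` with source `ϑ x`, to the set of pairs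
`(y, x) ∈ X × X` with `ς y = ς x`. -/
def GroupoidBiset.nabla {H : Type u₁} {G : Type u₂} [Groupoid H] [Groupoid G]
    {X : Type u₃} {ς : X → G} {ϑ : X → H} (B : GroupoidBiset H G X ς ϑ) :
    ((x : X) × (c : H) × (ϑ x ⟶ c)) → {p : X × X // ς p.1 = ς p.2} :=
  fun z => ⟨(B.lAct z.1 z.2.2, z.1), B.sigma_lAct z.1 z.2.2⟩

/-- A left principal `(H, G)`-biset: `ς` is surjective and the canonical map `∇` is
bijective. -/
def GroupoidBiset.IsLeftPrincipal {H : Type u₁} {G : Type u₂} [Groupoid H] [Groupoid G]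
    {X : Type u₃} {ς : X → G} {ϑ : X → H} (B : GroupoidBiset H G X ς ϑ) : Prop :=
  Function.Surjective ς ∧ Function.Bijective B.nabla

section Aux

variable {H : Type u₁} {G : Type u₂} [Groupoid H] [Groupoid G]
    {X : Type u₃} {ς : X → G} {ϑ : X → H} (B : GroupoidBiset H G X ς ϑ)

lemma GroupoidBiset.rAct_eqToHom (y : X) {c : G} (e : c = ς y) :
    B.rAct y (eqToHom e) = y := by
  subst e; exact B.rId y

/-- acting by `g` and then by `g⁻¹` returns the original element -/
lemma GroupoidBiset.rAct_rAct_inv (y : X) {c : G} (g : c ⟶ ς y) :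
    B.rAct (B.rAct y g) (Groupoid.inv g ≫ eqToHom (B.rBase y g).symm) = y := by
  rw [B.rComp, Groupoid.inv_comp, B.rId]

/-- acting by `g⁻¹` and then by `g` returns the original element -/
lemma GroupoidBiset.rAct_inv_rAct (x : X) {c : H} (h : ϑ x ⟶ c) {d : G} (g : ς x ⟶ d) :
    B.rAct (B.rAct (B.lAct x h) (Groupoid.inv g ≫ eqToHom (B.sigma_lAct x h).symm))
      (g ≫ eqToHom (B.rBase (B.lAct x h)
        (Groupoid.inv g ≫ eqToHom (B.sigma_lAct x h).symm)).symm)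
    = B.lAct x h := by
  rw [B.rComp, ← Category.assoc, Groupoid.comp_inv, Category.id_comp, B.rAct_eqToHom]

end Aux

/-- For a left principal `(H, G)`-biset `(X, ς, ϑ)`, the map
`Γ : (h, x, g) ↦ (x, g, (h · x) · g⁻¹)` — where `h` is an arrow of `H` with source `ϑ x` and
`g` an arrow of `G` with source `ς x` — is a bijection onto the set of triples `(x, y, g)`
with `g : ς x ⟶ ς y`.  (Together with the surjectivity of `ς`, this says that the canonical
projection `Σ` from the two-sided translation groupoid `H ⋉ X ⋊ G` to `G` is a weak
equivalence.) -/
theorem leftPrincipal_gamma_bijective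
    {H : Type u₁} {G : Type u₂} [Groupoid H] [Groupoid G]
    {X : Type u₃} {ς : X → G} {ϑ : X → H}
    (B : GroupoidBiset H G X ς ϑ) (hB : B.IsLeftPrincipal) :
    Function.Bijective
      (fun z : (x : X) × ((c : H) × (ϑ x ⟶ c)) × ((d : G) × (ς x ⟶ d)) =>
        (⟨z.1,
          B.rAct (B.lAct z.1 z.2.1.2)
            (Groupoid.inv z.2.2.2 ≫ eqToHom (B.sigma_lAct z.1 z.2.1.2).symm),
          z.2.2.2 ≫ eqToHom (B.rBase (B.lAct z.1 z.2.1.2)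
            (Groupoid.inv z.2.2.2 ≫ eqToHom (B.sigma_lAct z.1 z.2.1.2).symm)).symm⟩ :
          (x : X) × (y : X) × (ς x ⟶ ς y))) := by
  constructor
  · -- injectivity
    rintro ⟨x, ⟨⟨c, h⟩, ⟨d, g⟩⟩⟩ ⟨x', ⟨⟨c', h'⟩, ⟨d', g'⟩⟩⟩ hzz
    -- first components agree
    have hx : x = x' := congrArg (fun t : (x : X) × (y : X) × (ς x ⟶ ς y) => t.1) hzz
    subst hx
    -- recover the `G`-arrow data by repackaging
    have hT := congrArg
      (fun t : (x : X) × (y : X) × (ς x ⟶ ς y) =>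
        (⟨t.1, ς t.2.1, t.2.2⟩ : (x : X) × (d : G) × (ς x ⟶ d))) hzz
    have hpack : ∀ {dd : G} (gg : ς x ⟶ dd) {cc : H} (hh : ϑ x ⟶ cc),
        (⟨x, ς (B.rAct (B.lAct x hh)
            (Groupoid.inv gg ≫ eqToHom (B.sigma_lAct x hh).symm)),
          gg ≫ eqToHom (B.rBase (B.lAct x hh)
            (Groupoid.inv gg ≫ eqToHom (B.sigma_lAct x hh).symm)).symm⟩ :
          (x : X) × (d : G) × (ς x ⟶ d)) = ⟨x, dd, gg⟩ := by
      intro dd gg cc hh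
      refine Sigma.ext rfl (heq_of_eq ?_)
      exact Sigma.ext (B.rBase _ _) (comp_eqToHom_heq _ _)
    have hdg : (⟨x, d, g⟩ : (x : X) × (d : G) × (ς x ⟶ d)) = ⟨x, d', g'⟩ :=
      (hpack g h).symm.trans (hT.trans (hpack g' h'))
    simp only [Sigma.mk.inj_iff, heq_eq_eq, true_and] at hdg
    obtain ⟨hd, hg⟩ := hdg
    subst hd
    rw [heq_eq_eq] at hg
    subst hg
    -- recover `h · x` by acting back with `g`
    have hR := congrArg
      (fun t : (x : X) × (y : X) × (ς x ⟶ ς y) => B.rAct t.2.1 t.2.2) hzz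
    have hl : B.lAct x h = B.lAct x h' :=
      (B.rAct_inv_rAct x h g).symm.trans (hR.trans (B.rAct_inv_rAct x h' g))
    have hnab : B.nabla ⟨x, c, h⟩ = B.nabla ⟨x, c', h'⟩ :=
      Subtype.ext (Prod.ext hl rfl)
    have hs := hB.2.1 hnab
    simp only [Sigma.mk.inj_iff, heq_eq_eq, true_and] at hs
    obtain ⟨hc, hh⟩ := hs
    subst hc
    rw [heq_eq_eq] at hh
    subst hh
    rfl
  · -- surjectivity
    rintro ⟨x, y, g⟩
    obtain ⟨⟨x₀, c, h₀⟩, hz⟩ := hB.2.2 ⟨(B.rAct y g, x), B.rBase y g⟩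
    have hval := congrArg Subtype.val hz
    have hx : x₀ = x := congrArg Prod.snd hval
    subst hx
    have hw : B.lAct x₀ h₀ = B.rAct y g := congrArg Prod.fst hval
    refine ⟨⟨x₀, ⟨c, h₀⟩, ⟨ς y, g⟩⟩, ?_⟩
    have hY : B.rAct (B.lAct x₀ h₀)
        (Groupoid.inv g ≫ eqToHom (B.sigma_lAct x₀ h₀).symm) = y := by
      have hcongr := congrArg
        (fun p : {w : X // ς w = ς x₀} =>
          B.rAct p.1 (Groupoid.inv g ≫ eqToHom p.2.symm))
        (Subtype.ext hw : (⟨B.lAct x₀ h₀, B.sigma_lAct x₀ h₀⟩ : {w : X // ς w = ς x₀})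
          = ⟨B.rAct y g, B.rBase y g⟩)
      exact hcongr.trans (B.rAct_rAct_inv y g)
    refine Sigma.ext rfl (heq_of_eq ?_)
    exact Sigma.ext hY (comp_eqToHom_heq _ _)
end

section
/- Let H, G, K be groupoids, (X, ς, ϑ) a left principal (H, G)-biset, and ψ : K → G a morphism of groupoids (a functor). Let Y := { (x, u) : x ∈ X, u ∈ Obj(K), ς(x) = ψ(u) }, with maps pr₂ : Y → Obj(K), (x, u) ↦ u, and ϑ̃ : Y → Obj(H), (x, u) ↦ ϑ(x); let H act on the left by h·(x, u) := (h·x, u) for arrows h of H with source ϑ(x), and let K act on the right by (x, u)·f := (x·ψ(f), c) for arrows f : c ⟶ u of K. Then (Y, pr₂, ϑ̃) is a left principal (H, K)-biset: the stated actions satisfy the biset axioms, pr₂ is surjective, and the canonical map ∇_Y : { (h, (x, u)) : (x,u) ∈ Y, h an arrow of H with source ϑ(x) } → { ((y, u), (x, u')) ∈ Y × Y : u = u' }, (h, (x, u)) ↦ ((h·x, u), (x, u)), is bijective. -/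
open CategoryTheory

universe u₁ u₂ u₃ u₄

lemma GroupoidBiset.rAct_eqToHom_s11 {H : Type u₁} {G : Type u₂} [Groupoid H] [Groupoid G]
    {X : Type u₃} {ς : X → G} {ϑ : X → H} (B : GroupoidBiset H G X ς ϑ)
    (x : X) {c : G} (e : c = ς x) : B.rAct x (eqToHom e) = x := by
  subst e; simpa using B.rId x

lemma GroupoidBiset.rAct_congr {H : Type u₁} {G : Type u₂} [Groupoid H] [Groupoid G]
    {X : Type u₃} {ς : X → G} {ϑ : X → H} (B : GroupoidBiset H G X ς ϑ)
    (x : X) {c : G} {g g' : c ⟶ ς x} (e : g = g') : B.rAct x g = B.rAct x g' := by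
  rw [e]

/-- Pull-back of a left principal biset along a morphism of groupoids.  Given a left
principal `(H, G)`-biset `(X, ς, ϑ)` and a functor `ψ : K ⥤ G`, the set
`Y = { (x, u) : ς x = ψ u }` with anchors `pr₂ : Y → Obj(K)` and `ϑ̃ = ϑ ∘ pr₁ : Y → Obj(H)`,
left `H`-action `h · (x, u) = (h · x, u)` and right `K`-action `(x, u) · f = (x · ψ(f), c)`
for `f : c ⟶ u`, is a left principal `(H, K)`-biset: the actions satisfy the biset axioms,
`pr₂` is surjective, and the canonical map `∇_Y` is bijective. -/
theorem pullback_of_leftPrincipal_is_leftPrincipal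
    {H : Type u₁} {G : Type u₂} {K : Type u₃} [Groupoid H] [Groupoid G] [Groupoid K]
    {X : Type u₄} {ς : X → G} {ϑ : X → H}
    (B : GroupoidBiset H G X ς ϑ) (hB : B.IsLeftPrincipal)
    (ψ : K ⥤ G) :
    ∃ B' : GroupoidBiset H K {p : X × K // ς p.1 = ψ.obj p.2}
        (fun y => y.1.2) (fun y => ϑ y.1.1),
      (∀ (y : {p : X × K // ς p.1 = ψ.obj p.2}) (c : H) (h : ϑ y.1.1 ⟶ c),
        B'.lAct y h =
          ⟨(B.lAct y.1.1 h, y.1.2), (B.sigma_lAct y.1.1 h).trans y.2⟩) ∧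
      (∀ (y : {p : X × K // ς p.1 = ψ.obj p.2}) (c : K) (f : c ⟶ y.1.2),
        B'.rAct y f =
          ⟨(B.rAct y.1.1 (ψ.map f ≫ eqToHom y.2.symm), c),
            B.rBase y.1.1 (ψ.map f ≫ eqToHom y.2.symm)⟩) ∧
      B'.IsLeftPrincipal := by
  refine ⟨{
    lAct := fun y c h => ⟨(B.lAct y.1.1 h, y.1.2), (B.sigma_lAct y.1.1 h).trans y.2⟩
    lBase := fun y c h => B.lBase y.1.1 h
    lId := fun y => by
      apply Subtype.ext; apply Prod.ext
      · exact B.lId y.1.1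
      · rfl
    lComp := fun y c c' h h' => by
      apply Subtype.ext; apply Prod.ext
      · exact B.lComp y.1.1 h h'
      · rfl
    rAct := fun y c f =>
      ⟨(B.rAct y.1.1 (ψ.map f ≫ eqToHom y.2.symm), c),
        B.rBase y.1.1 (ψ.map f ≫ eqToHom y.2.symm)⟩
    rBase := fun y c f => rfl
    rId := fun y => by
      apply Subtype.ext; apply Prod.ext
      · show B.rAct y.1.1 (ψ.map (𝟙 y.1.2) ≫ eqToHom y.2.symm) = y.1.1
        rw [ψ.map_id, Category.id_comp]
        exact B.rAct_eqToHom_s11 y.1.1 y.2.symm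
      · rfl
    rComp := fun y c c' f f' => by
      apply Subtype.ext; apply Prod.ext
      · dsimp only
        refine Eq.trans ?_ ((B.rComp y.1.1 (ψ.map f ≫ eqToHom y.2.symm) (ψ.map f')).trans ?_)
        · apply B.rAct_congr
          simp [eqToHom_trans]
        · apply B.rAct_congr
          simp [eqToHom_trans]
      · rfl
    theta_rAct := fun y c f => B.theta_rAct y.1.1 _
    sigma_lAct := fun y c h => rfl
    middle_assoc := fun y c h d f => by
      apply Subtype.ext; apply Prod.ext
      · dsimp only
        refine Eq.trans ?_ ((B.middle_assoc y.1.1 h (ψ.map f ≫ eqToHom y.2.symm)).trans ?_)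
        · rfl
        · apply B.rAct_congr
          simp [eqToHom_trans]
      · rfl
  }, fun y c h => rfl, fun y c f => rfl, ?_, ?_⟩
  · -- surjectivity of pr₂
    intro u
    obtain ⟨x, hx⟩ := hB.1 (ψ.obj u)
    exact ⟨⟨(x, u), hx⟩, rfl⟩
  · -- bijectivity of nabla
    constructor
    · rintro ⟨⟨⟨x, u⟩, e⟩, c, h⟩ ⟨⟨⟨x', u'⟩, e'⟩, c', h'⟩ heq
      simp only [GroupoidBiset.nabla, Subtype.mk.injEq, Prod.mk.injEq] at heq
      obtain ⟨⟨h1, h2⟩, h4, h5⟩ := heq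
      subst h4; subst h5
      have key : B.nabla ⟨x, c, h⟩ = B.nabla ⟨x, c', h'⟩ := by
        apply Subtype.ext
        apply Prod.ext
        · exact h1
        · rfl
      have h6 := hB.2.1 key
      obtain ⟨-, h7⟩ := Sigma.ext_iff.mp h6
      obtain ⟨h8, h9⟩ := Sigma.ext_iff.mp (eq_of_heq h7)
      subst h8
      have h10 := eq_of_heq h9
      subst h10
      rfl
    · rintro ⟨⟨⟨⟨y₁, u₁⟩, e₁⟩, ⟨⟨x₁, u₂⟩, e₂⟩⟩, (hp : u₁ = u₂)⟩
      subst hp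
      obtain ⟨⟨x₀, c, h⟩, hz⟩ := hB.2.2 ⟨(y₁, x₁), e₁.trans e₂.symm⟩
      have hz' := congrArg Subtype.val hz
      simp only [GroupoidBiset.nabla] at hz'
      obtain ⟨hz1, hz2⟩ := Prod.mk.inj hz'
      subst hz2
      refine ⟨⟨⟨(x₀, u₁), e₂⟩, c, h⟩, ?_⟩
      apply Subtype.ext
      apply Prod.ext
      · exact Subtype.ext (Prod.ext hz1 rfl)
      · rfl
end
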